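/- Let λ ∈ ℝ, λ' < λ − 1/2, and let a, b : ℕ → L²-kernel norms with A² = ∑_n n! e^{2λn} a(n)², B² = ∑_n n! e^{2λn} b(n)². Then for the Wick product kernels c(n) = ∑_{m=0}^n a(n−m)·b(m) (with |Φ^{(n-m)} ⊗̂ Ψ^{(m)}|_{L²} ≤ a(n−m)b(m)), one has ∑_n n! e^{2λ'n} c(n)² ≤ C²_{λ,λ'} A² B² with C_{λ,λ'} = (2(λ−λ')−1)^{-1/2} e^{λ−λ'−1}. -/

import Mathlib

/-!
Writing `n! = C(n,m) (n-m)! m!`, Cauchy–Schwarz weighted by the binomial coefficients gives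
`n! c(n)² ≤ 2ⁿ ∑ₘ (n-m)! m! a(n-m)² b(m)²`. Since `2 ≤ e ≤ e^{2(λ-λ')}`, the factor `2ⁿ e^{2λ'n}` is
absorbed into `e^{2λn}`, so the `λ'`-weighted terms of `c` are dominated by the Cauchy product of
the `λ`-weighted terms of `a` and `b`, whose sum is `A² B²`. Finally `C²_{λ,λ'} ≥ 1` because
`e^y ≥ 1 + y`.
-/

open Finset Real Nat

theorem factorial_mul_sq_sum_range_le (x : ℕ → ℝ) (n : ℕ) :
    n ! * (∑ m ∈ range (n + 1), x m) ^ 2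
      ≤ 2 ^ n * ∑ m ∈ range (n + 1), ((n - m)! * m ! : ℝ) * x m ^ 2 := by
  have hchoose : ∀ m ∈ range (n + 1), (0 : ℝ) < n.choose m := fun m hm =>
    Nat.cast_pos.2 (Nat.choose_pos (Nat.lt_succ_iff.1 (mem_range.1 hm)))
  have hsedrakyan := sq_sum_div_le_sum_sq_div (range (n + 1)) x hchoose
  have hsum : ∑ m ∈ range (n + 1), (n.choose m : ℝ) = 2 ^ n := by
    exact_mod_cast Nat.sum_range_choose n
  have hterm : ∀ m ∈ range (n + 1),
      x m ^ 2 / n.choose m = ((n - m)! * m ! : ℝ) * x m ^ 2 / n ! := by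
    intro m hm
    have hmn : m ≤ n := Nat.lt_succ_iff.1 (mem_range.1 hm)
    rw [Nat.choose_eq_factorial_div_factorial hmn,
      Nat.cast_div (Nat.factorial_mul_factorial_dvd_factorial hmn) (by positivity)]
    push_cast
    field_simp
  rw [hsum, sum_congr rfl hterm, ← sum_div, div_le_div_iff₀ (by positivity) (by positivity)]
    at hsedrakyan
  linarith

theorem two_pow_mul_exp_le_exp {s t : ℝ} (h : Real.log 2 ≤ 2 * (s - t)) (n : ℕ) :
    2 ^ n * exp (2 * t * n) ≤ exp (2 * s * n) := by
  have h2 : (2 : ℝ) ^ n ≤ exp (2 * (s - t) * n) := by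
    rw [← rpow_natCast, rpow_def_of_pos two_pos]
    gcongr
  calc (2 : ℝ) ^ n * exp (2 * t * n) ≤ exp (2 * (s - t) * n) * exp (2 * t * n) := by gcongr
    _ = exp (2 * s * n) := by rw [← exp_add]; ring_nf

theorem one_le_sq_exp_sub_one_div_sqrt {x : ℝ} (hx : 1 / 2 < x) :
    1 ≤ (exp (x - 1) / √(2 * x - 1)) ^ 2 := by
  have hpos : 0 < 2 * x - 1 := by linarith
  rw [div_pow, sq_sqrt hpos.le, ← exp_nat_mul, Nat.cast_ofNat, one_le_div hpos]
  linarith [add_one_le_exp (2 * (x - 1))]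

theorem tsum_le_tsum_mul_tsum_of_le_sum_range {u f g : ℕ → ℝ} (hu : ∀ n, 0 ≤ u n)
    (hf₀ : ∀ n, 0 ≤ f n) (hg₀ : ∀ n, 0 ≤ g n) (hf : Summable f) (hg : Summable g)
    (h : ∀ n, u n ≤ ∑ m ∈ range (n + 1), f (n - m) * g m) :
    ∑' n, u n ≤ (∑' n, f n) * ∑' n, g n := by
  have hnorm : ∀ {v : ℕ → ℝ}, (∀ n, 0 ≤ v n) → Summable v → Summable fun n => ‖v n‖ :=
    fun hv₀ hv => hv.congr fun n => (Real.norm_of_nonneg (hv₀ n)).symm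
  have hcauchy := hasSum_sum_range_mul_of_summable_norm (hnorm hg₀ hg) (hnorm hf₀ hf)
  simp_rw [mul_comm (g _)] at hcauchy
  rw [mul_comm, ← hcauchy.tsum_eq]
  exact (hcauchy.summable.of_nonneg_of_le hu h).tsum_le_tsum h hcauchy.summable

/-- The `n`-th term of `‖Φ‖²_λ = ∑ n! e^{2λn} |Φ⁽ⁿ⁾|²`, with `a n` standing for `|Φ⁽ⁿ⁾|`. -/
noncomputable def normSqTerm (lam : ℝ) (a : ℕ → ℝ) (n : ℕ) : ℝ := n ! * exp (2 * lam * n) * a n ^ 2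

def cauchyProduct (a b : ℕ → ℝ) (n : ℕ) : ℝ := ∑ m ∈ range (n + 1), a (n - m) * b m

theorem normSqTerm_nonneg (lam : ℝ) (a : ℕ → ℝ) (n : ℕ) : 0 ≤ normSqTerm lam a n := by
  unfold normSqTerm
  positivity

theorem normSqTerm_cauchyProduct_le {lam lam' : ℝ} (h : Real.log 2 ≤ 2 * (lam - lam'))
    (a b : ℕ → ℝ) (n : ℕ) :
    normSqTerm lam' (cauchyProduct a b) n
      ≤ ∑ m ∈ range (n + 1), normSqTerm lam a (n - m) * normSqTerm lam b m := by
  have hexp : ∀ m ∈ range (n + 1),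
      exp (2 * lam * n) = exp (2 * lam * (n - m : ℕ)) * exp (2 * lam * m) := fun m hm => by
    rw [← exp_add, Nat.cast_sub (Nat.lt_succ_iff.1 (mem_range.1 hm))]
    ring_nf
  calc normSqTerm lam' (cauchyProduct a b) n
      = exp (2 * lam' * n) * (n ! * (∑ m ∈ range (n + 1), a (n - m) * b m) ^ 2) := by
        rw [normSqTerm, cauchyProduct]; ring
    _ ≤ exp (2 * lam' * n) *
          (2 ^ n * ∑ m ∈ range (n + 1), ((n - m)! * m ! : ℝ) * (a (n - m) * b m) ^ 2) := by
        gcongr ?_ * ?_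
        exact factorial_mul_sq_sum_range_le _ n
    _ = 2 ^ n * exp (2 * lam' * n) *
          ∑ m ∈ range (n + 1), ((n - m)! * m ! : ℝ) * (a (n - m) * b m) ^ 2 := by ring
    _ ≤ exp (2 * lam * n) *
          ∑ m ∈ range (n + 1), ((n - m)! * m ! : ℝ) * (a (n - m) * b m) ^ 2 := by
        gcongr ?_ * _
        exact two_pow_mul_exp_le_exp h n
    _ = ∑ m ∈ range (n + 1), normSqTerm lam a (n - m) * normSqTerm lam b m := by
        rw [mul_sum]
        refine sum_congr rfl fun m hm => ?_
        rw [hexp m hm, normSqTerm, normSqTerm]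
        ring

theorem stmt9_general (lam lam' : ℝ) (h : lam' < lam - 1 / 2)
    (a b : ℕ → ℝ)
    (hA : Summable (fun n : ℕ => (Nat.factorial n : ℝ) * Real.exp (2 * lam * n) * (a n) ^ 2))
    (hB : Summable (fun n : ℕ => (Nat.factorial n : ℝ) * Real.exp (2 * lam * n) * (b n) ^ 2)) :
    ∑' n : ℕ, (Nat.factorial n : ℝ) * Real.exp (2 * lam' * n) *
        (∑ m ∈ Finset.range (n + 1), a (n - m) * b m) ^ 2
      ≤ (Real.exp (lam - lam' - 1) / Real.sqrt (2 * (lam - lam') - 1)) ^ 2 *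
          (∑' n : ℕ, (Nat.factorial n : ℝ) * Real.exp (2 * lam * n) * (a n) ^ 2) *
          (∑' n : ℕ, (Nat.factorial n : ℝ) * Real.exp (2 * lam * n) * (b n) ^ 2) := by
  have hlog : Real.log 2 ≤ 2 * (lam - lam') := by linarith [Real.log_two_lt_d9]
  have hC := one_le_sq_exp_sub_one_div_sqrt (x := lam - lam') (by linarith)
  have hAB : 0 ≤ (∑' n, normSqTerm lam a n) * ∑' n, normSqTerm lam b n :=
    mul_nonneg (tsum_nonneg (normSqTerm_nonneg lam a)) (tsum_nonneg (normSqTerm_nonneg lam b))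
  calc _ ≤ (∑' n, normSqTerm lam a n) * ∑' n, normSqTerm lam b n :=
        tsum_le_tsum_mul_tsum_of_le_sum_range (normSqTerm_nonneg lam' (cauchyProduct a b))
          (normSqTerm_nonneg lam a) (normSqTerm_nonneg lam b) hA hB
          (normSqTerm_cauchyProduct_le hlog a b)
    _ ≤ _ := by
        rw [mul_assoc]
        exact le_mul_of_one_le_left hAB hC

/-- Kernel-level Potthoff–Timpel estimate for the Wick product: with λ' < λ − ½ and
Cauchy-product kernels c(n) = ∑_{m≤n} a(n−m) b(m),
∑ n! e^{2λ'n} c(n)² ≤ C²_{λ,λ'} (∑ n! e^{2λn} a(n)²)(∑ n! e^{2λn} b(n)²),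
where C_{λ,λ'} = (2(λ−λ')−1)^{-1/2} e^{λ−λ'−1}. -/
theorem stmt9 (lam lam' : ℝ) (h : lam' < lam - 1 / 2)
    (a b : ℕ → ℝ) (ha : ∀ n, 0 ≤ a n) (hb : ∀ n, 0 ≤ b n)
    (hA : Summable (fun n : ℕ => (Nat.factorial n : ℝ) * Real.exp (2 * lam * n) * (a n) ^ 2))
    (hB : Summable (fun n : ℕ => (Nat.factorial n : ℝ) * Real.exp (2 * lam * n) * (b n) ^ 2)) :
    ∑' n : ℕ, (Nat.factorial n : ℝ) * Real.exp (2 * lam' * n) *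
        (∑ m ∈ Finset.range (n + 1), a (n - m) * b m) ^ 2
      ≤ (Real.exp (lam - lam' - 1) / Real.sqrt (2 * (lam - lam') - 1)) ^ 2 *
          (∑' n : ℕ, (Nat.factorial n : ℝ) * Real.exp (2 * lam * n) * (a n) ^ 2) *
          (∑' n : ℕ, (Nat.factorial n : ℝ) * Real.exp (2 * lam * n) * (b n) ^ 2) :=
  stmt9_general lam lam' h a b hA hB
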